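/- arXiv:2204.03784 — 5 statements merged into one kernel-verified Lean document; each statement's English description precedes it below -/
import Mathlib

section
/- The importance weight identity: for finite sample spaces, if T̃(X) and T(X) are the reverse and forward annealing processes built from distributions P_k(x) = exp(-E_k(x))/Z_k and transition kernels T_k satisfying the invariance condition P_k(x') = Σ_x T_k(x'|x) P_k(x), then T̃(X)/T(X) = (Z_0/Z_K) · Π_{k=1}^K exp(-E_k(x^{(k)}) + E_{k-1}(x^{(k)})) whenever T(X) > 0. -/
/-!
Every transition factor `T_k(x^{(k+1)} | x^{(k)})` of the reverse process cancels against the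
same factor of the forward process, so the weight is the product of the ratios
`P_k(x^{(k)}) / P_{k-1}(x^{(k)})`. For Gibbs distributions each such ratio is
`(Z_{k-1} / Z_k) · exp(-E_k(x^{(k)}) + E_{k-1}(x^{(k)}))`, and the partition functions telescope.
-/

open Finset Real

theorem Fin.prod_univ_castSucc_mul_last {M : Type*} [CommMonoid M] {n : ℕ}
    (f : Fin (n + 1) → M) :
    (∏ i : Fin n, f i.castSucc) * f (Fin.last n) = f 0 * ∏ i : Fin n, f i.succ := by
  rw [← Fin.prod_univ_castSucc, Fin.prod_univ_succ]

theorem Fin.prod_univ_castSucc_div_succ {α : Type*} [Field α] {n : ℕ} (f : Fin (n + 1) → α)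
    (hf : ∀ i, f i ≠ 0) :
    ∏ i : Fin n, f i.castSucc / f i.succ = f 0 / f (Fin.last n) := by
  rw [prod_div_distrib, div_eq_div_iff (prod_ne_zero_iff.mpr fun i _ => hf _) (hf _),
    Fin.prod_univ_castSucc_mul_last]

theorem sum_exp_neg_pos {S : Type*} [Fintype S] [Nonempty S] (E : S → ℝ) :
    0 < ∑ x, exp (-E x) :=
  sum_pos (fun _ _ => exp_pos _) univ_nonempty

theorem exp_neg_div_div_exp_neg_div (a b z w : ℝ) (hz : z ≠ 0) (hw : w ≠ 0) :
    (exp (-a) / z) / (exp (-b) / w) = w / z * exp (-a + b) := by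
  rw [exp_add, exp_neg b]
  field_simp

theorem reverse_div_forward_eq_prod {S α : Type*} [Field α] {K : ℕ} (t : Fin K → α)
    (P : Fin (K + 2) → S → α) (X : Fin (K + 1) → S)
    (hP : ∀ i, P i.castSucc (X i) ≠ 0) (ht : ∏ i, t i ≠ 0) :
    (∏ i : Fin K, t i * P i.succ.castSucc (X i.castSucc) / P i.succ.castSucc (X i.succ)) *
        P (Fin.last (K + 1)) (X (Fin.last K)) / ((∏ i, t i) * P 0 (X 0)) =
      ∏ i : Fin (K + 1), P i.succ (X i) / P i.castSucc (X i) := by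
  have hnum : (∏ i : Fin K, P i.succ.castSucc (X i.castSucc)) *
      P (Fin.last (K + 1)) (X (Fin.last K)) = ∏ i : Fin (K + 1), P i.succ (X i) := by
    rw [Fin.prod_univ_castSucc (f := fun i : Fin (K + 1) => P i.succ (X i))]
    simp only [Fin.succ_castSucc, Fin.succ_last]
  have hden : P 0 (X 0) * ∏ i : Fin K, P i.succ.castSucc (X i.succ) =
      ∏ i : Fin (K + 1), P i.castSucc (X i) := by
    rw [Fin.prod_univ_succ (f := fun i : Fin (K + 1) => P i.castSucc (X i))]
    simp only [Fin.castSucc_zero]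
  have hden_ne : ∏ i : Fin K, P i.succ.castSucc (X i.succ) ≠ 0 :=
    prod_ne_zero_iff.mpr fun i _ => Fin.succ_castSucc i ▸ hP i.succ
  rw [prod_div_distrib, prod_div_distrib, prod_mul_distrib, ← hnum, ← hden]
  have h0 : P 0 (X 0) ≠ 0 := hP 0
  field_simp

theorem prod_gibbs_div_gibbs {S : Type*} {n : ℕ} (E : Fin (n + 1) → S → ℝ)
    (Z : Fin (n + 1) → ℝ) (hZ : ∀ k, Z k ≠ 0) (X : Fin n → S) :
    ∏ i : Fin n, (exp (-E i.succ (X i)) / Z i.succ) / (exp (-E i.castSucc (X i)) / Z i.castSucc) =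
      Z 0 / Z (Fin.last n) * ∏ i : Fin n, exp (-E i.succ (X i) + E i.castSucc (X i)) := by
  simp only [exp_neg_div_div_exp_neg_div _ _ _ _ (hZ _) (hZ _), prod_mul_distrib,
    Fin.prod_univ_castSucc_div_succ Z hZ]

theorem stmt0_general {S : Type*} [Fintype S] (K : ℕ)
    (E : Fin (K + 2) → S → ℝ)
    (Z : Fin (K + 2) → ℝ) (hZ : ∀ k, Z k = ∑ x : S, Real.exp (-(E k x)))
    (P : Fin (K + 2) → S → ℝ) (hP : ∀ k x, P k x = Real.exp (-(E k x)) / Z k)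
    (T : Fin (K + 2) → S → S → ℝ)
    (X : Fin (K + 1) → S)
    (Tfwd Trev : ℝ)
    (hTfwd : Tfwd =
      (∏ i : Fin K, T i.succ.castSucc (X i.succ) (X i.castSucc)) * P 0 (X 0))
    (hTrev : Trev =
      (∏ i : Fin K, T i.succ.castSucc (X i.succ) (X i.castSucc) *
          P i.succ.castSucc (X i.castSucc) / P i.succ.castSucc (X i.succ)) *
        P (Fin.last (K + 1)) (X (Fin.last K)))
    (hpos : 0 < Tfwd) :
    Trev / Tfwd = (Z 0 / Z (Fin.last (K + 1))) *
      ∏ i : Fin (K + 1), Real.exp (-(E i.succ (X i)) + E i.castSucc (X i)) := by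
  have : Nonempty S := ⟨X 0⟩
  have hZ_ne : ∀ k, Z k ≠ 0 := fun k => hZ k ▸ (sum_exp_neg_pos (E k)).ne'
  have hP_ne : ∀ k x, P k x ≠ 0 := fun k x => hP k x ▸ div_ne_zero (exp_pos _).ne' (hZ_ne k)
  have hT_ne : ∏ i : Fin K, T i.succ.castSucc (X i.succ) (X i.castSucc) ≠ 0 :=
    left_ne_zero_of_mul (hTfwd ▸ hpos.ne')
  rw [hTrev, hTfwd, reverse_div_forward_eq_prod
    (fun i => T i.succ.castSucc (X i.succ) (X i.castSucc)) P X (fun _ => hP_ne _ _) hT_ne]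
  simp only [hP]
  exact prod_gibbs_div_gibbs E Z hZ_ne X

/-- Importance weight identity.
States `x^{(1)},…,x^{(K)}` are encoded as `X : Fin (K+1) → S` (paper's K is `K+1` here),
energies `E k` for `k = 0,…,K+1` (paper's `0,…,K`). The forward process `Tfwd` and reverse
process `Trev` are defined by the hypotheses, and the ratio `Trev / Tfwd` equals
`(Z 0 / Z_K) · ∏ exp(-E_k(x^{(k)}) + E_{k-1}(x^{(k)}))` whenever `Tfwd > 0`. -/
theorem stmt0 {S : Type*} [Fintype S] (K : ℕ)
    (E : Fin (K + 2) → S → ℝ)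
    (Z : Fin (K + 2) → ℝ) (hZ : ∀ k, Z k = ∑ x : S, Real.exp (-(E k x)))
    (P : Fin (K + 2) → S → ℝ) (hP : ∀ k x, P k x = Real.exp (-(E k x)) / Z k)
    (T : Fin (K + 2) → S → S → ℝ)
    (hinv : ∀ k x', (∑ x : S, T k x' x * P k x) = P k x')
    (X : Fin (K + 1) → S)
    (Tfwd Trev : ℝ)
    (hTfwd : Tfwd =
      (∏ i : Fin K, T i.succ.castSucc (X i.succ) (X i.castSucc)) * P 0 (X 0))
    (hTrev : Trev =
      (∏ i : Fin K, T i.succ.castSucc (X i.succ) (X i.castSucc) *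
          P i.succ.castSucc (X i.castSucc) / P i.succ.castSucc (X i.succ)) *
        P (Fin.last (K + 1)) (X (Fin.last K)))
    (hpos : 0 < Tfwd) :
    Trev / Tfwd = (Z 0 / Z (Fin.last (K + 1))) *
      ∏ i : Fin (K + 1), Real.exp (-(E i.succ (X i)) + E i.castSucc (X i)) :=
  stmt0_general K E Z hZ P hP T X Tfwd Trev hTfwd hTrev hpos
end

section
/- The annealed importance sampling identity (Jarzynski equality): Z_K = Z_0 · Σ_X W(X) T(X), where W(X) = Π_{k=1}^K exp(-E_k(x^{(k)}) + E_{k-1}(x^{(k)})) and T is the forward annealing process, provided each transition kernel T_k leaves P_k invariant. -/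
lemma tele : ∀ (n : ℕ) (f : Fin (n + 2) → ℝ), (∀ k, f k ≠ 0) →
    (∏ i : Fin (n + 1), f i.succ / f i.castSucc) = f (Fin.last (n + 1)) / f 0 := by
  intro n
  induction n with
  | zero =>
    intro f hf
    simp [Fin.prod_univ_one]
  | succ n ih =>
    intro f hf
    rw [Fin.prod_univ_succ]
    have h2 : (∏ i : Fin (n + 1), f i.succ.succ / f i.succ.castSucc)
        = (∏ i : Fin (n + 1), (fun k => f k.succ) i.succ / (fun k => f k.succ) i.castSucc) := by
      apply Finset.prod_congr rfl
      intro i _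
      simp [← Fin.succ_castSucc]
    rw [h2, ih (fun k => f k.succ) (fun k => hf k.succ)]
    simp only [Fin.succ_last]
    have h0 : ((0 : Fin (n+2)).succ : Fin (n+3)) = 1 := rfl
    have h1 : ((0 : Fin (n+2)).castSucc : Fin (n+3)) = 0 := rfl
    rw [h0, h1]
    have := hf 0
    have := hf 1
    field_simp

lemma aux {S : Type*} [Fintype S] :
    ∀ (n : ℕ) (F : Fin (n + 1) → S → ℝ) (M : Fin n → S → S → ℝ)
      (μ : Fin (n + 2) → S → ℝ) (c : Fin (n + 1) → ℝ),
      (∀ i : Fin (n + 1), ∀ x, F i x * μ i.castSucc x = c i * μ i.succ x) →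
      (∀ i : Fin n, ∀ x', (∑ x : S, M i x' x * μ i.succ.castSucc x) = μ i.succ.castSucc x') →
      (∑ X : Fin (n + 1) → S,
          (∏ i : Fin (n + 1), F i (X i)) *
            ((∏ i : Fin n, M i (X i.succ) (X i.castSucc)) * μ 0 (X 0)))
        = (∏ i : Fin (n + 1), c i) * ∑ x : S, μ (Fin.last (n + 1)) x := by
  intro n
  induction n with
  | zero =>
    intro F M μ c hstep hinv
    rw [← (Equiv.funUnique (Fin 1) S).symm.sum_comp]
    simp only [Equiv.funUnique_symm_apply, Fin.prod_univ_one, Finset.univ_eq_empty,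
      Finset.prod_empty, one_mul, Fin.prod_univ_zero]
    rw [Finset.mul_sum]
    refine Finset.sum_congr rfl fun x _ => ?_
    have h := hstep 0 x
    have e1 : ((0:Fin 1).castSucc) = (0 : Fin 2) := rfl
    have e2 : ((0:Fin 1).succ) = Fin.last 1 := rfl
    rw [e1, e2] at h
    simpa using h
  | succ n ih =>
    intro F M μ c hstep hinv
    rw [← (Fin.consEquiv (fun _ : Fin (n + 2) => S)).sum_comp
      (fun X => (∏ i : Fin (n + 2), F i (X i)) *
            ((∏ i : Fin (n+1), M i (X i.succ) (X i.castSucc)) * μ 0 (X 0))),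
      Fintype.sum_prod_type]
    have key : ∀ (x0 : S) (Y : Fin (n+1) → S),
        ((fun X : Fin (n + 2) → S => (∏ i : Fin (n + 2), F i (X i)) *
            ((∏ i : Fin (n+1), M i (X i.succ) (X i.castSucc)) * μ 0 (X 0)))
          (Fin.cons x0 Y))
        = ((∏ i : Fin (n+1), F i.succ (Y i)) *
            (∏ j : Fin n, M j.succ (Y j.succ) (Y j.castSucc))) *
          (M 0 (Y 0) x0 * (F 0 x0 * μ 0 x0)) := by
      intro x0 Y
      simp only [Fin.prod_univ_succ, ← Fin.succ_castSucc, Fin.cons_succ, Fin.cons_zero,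
        Fin.castSucc_zero]
      ring
    have e2 : ((0 : Fin (n+1)).succ.castSucc) = ((0 : Fin (n+2)).succ) := by
      apply Fin.ext; simp
    have hsum : ∀ Y : Fin (n+1) → S,
        (∑ x0 : S, ((∏ i : Fin (n+1), F i.succ (Y i)) *
            (∏ j : Fin n, M j.succ (Y j.succ) (Y j.castSucc))) *
          (M 0 (Y 0) x0 * (F 0 x0 * μ 0 x0)))
        = c 0 * ((∏ i : Fin (n+1), F i.succ (Y i)) *
            ((∏ j : Fin n, M j.succ (Y j.succ) (Y j.castSucc)) *
              μ ((0 : Fin (n+2)).succ) (Y 0))) := by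
      intro Y
      rw [← Finset.mul_sum]
      have h1 : ∀ x0 : S, M 0 (Y 0) x0 * (F 0 x0 * μ 0 x0)
          = c 0 * (M 0 (Y 0) x0 * μ ((0 : Fin (n+2)).succ) x0) := by
        intro x0
        have h := hstep 0 x0
        rw [Fin.castSucc_zero] at h
        rw [h]; ring
      rw [Finset.sum_congr rfl (fun x0 _ => h1 x0), ← Finset.mul_sum]
      have h2 := hinv 0 (Y 0)
      rw [e2] at h2
      rw [h2]; ring
    rw [Finset.sum_comm]
    simp only [Fin.consEquiv_apply]
    calc (∑ Y : Fin (n+1) → S, ∑ x0 : S,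
          ((fun X : Fin (n + 2) → S => (∏ i : Fin (n + 2), F i (X i)) *
            ((∏ i : Fin (n+1), M i (X i.succ) (X i.castSucc)) * μ 0 (X 0)))
          (Fin.cons x0 Y)))
        = ∑ Y : Fin (n+1) → S, c 0 * ((∏ i : Fin (n+1), F i.succ (Y i)) *
            ((∏ j : Fin n, M j.succ (Y j.succ) (Y j.castSucc)) *
              μ ((0 : Fin (n+2)).succ) (Y 0))) := by
          refine Finset.sum_congr rfl fun Y _ => ?_
          rw [Finset.sum_congr rfl (fun x0 _ => key x0 Y)]
          exact hsum Y
      _ = c 0 * ((∏ i : Fin (n+1), c i.succ) *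
            ∑ x : S, μ ((Fin.last (n+1)).succ) x) := by
          rw [← Finset.mul_sum]
          congr 1
          exact ih (fun i => F i.succ) (fun j => M j.succ) (fun k => μ k.succ)
            (fun i => c i.succ)
            (fun i x => by
              have h := hstep i.succ x
              rw [← Fin.succ_castSucc] at h
              exact h)
            (fun j x' => by
              have h := hinv j.succ x'
              rw [← Fin.succ_castSucc j.succ] at h
              exact h)
      _ = (∏ i : Fin (n+2), c i) * ∑ x : S, μ (Fin.last (n+2)) x := by
          rw [Fin.succ_last, Fin.prod_univ_succ c]
          ring

/-- The annealed importance sampling identity (Jarzynski equality):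
`Z_K = Z_0 · Σ_X W(X) T(X)`, where `W(X) = ∏_{k=1}^K exp(-E_k(x^{(k)}) + E_{k-1}(x^{(k)}))`
and `T` is the forward annealing process built from kernels `T_k` leaving `P_k` invariant.
States `x^{(1)},…,x^{(K)}` are encoded as `X : Fin (K+1) → S` (paper's K is `K+1` here). -/
theorem stmt1 {S : Type*} [Fintype S] (K : ℕ)
    (E : Fin (K + 2) → S → ℝ)
    (Z : Fin (K + 2) → ℝ) (hZ : ∀ k, Z k = ∑ x : S, Real.exp (-(E k x)))
    (P : Fin (K + 2) → S → ℝ) (hP : ∀ k x, P k x = Real.exp (-(E k x)) / Z k)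
    (T : Fin (K + 2) → S → S → ℝ)
    (hinv : ∀ k x', (∑ x : S, T k x' x * P k x) = P k x') :
    Z (Fin.last (K + 1)) = Z 0 *
      ∑ X : Fin (K + 1) → S,
        (∏ i : Fin (K + 1), Real.exp (-(E i.succ (X i)) + E i.castSucc (X i))) *
          ((∏ i : Fin K, T i.succ.castSucc (X i.succ) (X i.castSucc)) * P 0 (X 0)) := by
  rcases isEmpty_or_nonempty S with hS | hS
  · haveI : IsEmpty (Fin (K + 1) → S) := ⟨fun f => IsEmpty.false (f 0)⟩
    simp [hZ]
  · have hZpos : ∀ k, 0 < Z k := fun k => by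
      rw [hZ]; exact Finset.sum_pos (fun x _ => Real.exp_pos _) Finset.univ_nonempty
    have hstep : ∀ (i : Fin (K + 1)) (x : S),
        (fun (i : Fin (K+1)) (x : S) => Real.exp (-(E i.succ x) + E i.castSucc x)) i x
          * P i.castSucc x = (Z i.succ / Z i.castSucc) * P i.succ x := by
      intro i x
      simp only
      rw [hP, hP]
      have h1 := (hZpos i.castSucc).ne'
      have h2 := (hZpos i.succ).ne'
      field_simp
      rw [← Real.exp_add]
      ring_nf
    have h := aux K (fun i x => Real.exp (-(E i.succ x) + E i.castSucc x))
      (fun i => T i.succ.castSucc) P (fun i => Z i.succ / Z i.castSucc)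
      hstep (fun i x' => hinv _ x')
    rw [h]
    have hone : (∑ x : S, P (Fin.last (K + 1)) x) = 1 := by
      simp only [hP]
      rw [← Finset.sum_div, ← hZ, div_self (hZpos _).ne']
    rw [hone, tele K Z (fun k => (hZpos k).ne')]
    rw [mul_one, mul_div_assoc', mul_comm, mul_div_assoc, div_self (hZpos 0).ne', mul_one]
end

section
/- The mAIS identity: Z_K = Z_0 · Σ_V Λ(V) τ(V), where Λ(V) = Π_{k=1}^K exp(-E_V(v^{(k)},k) + E_V(v^{(k)},k-1)) and τ is the annealing process over the marginal distributions, provided each τ_k leaves P_k(v) invariant. -/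
lemma stmt12_aux {V : Type*} [Fintype V] [Nonempty V] :
    ∀ (K : ℕ) (EV : Fin (K + 2) → V → ℝ) (Z : Fin (K + 2) → ℝ),
      (∀ k, Z k = ∑ v : V, Real.exp (-(EV k v))) →
      ∀ (P : Fin (K + 2) → V → ℝ), (∀ k v, P k v = Real.exp (-(EV k v)) / Z k) →
      ∀ (τ : Fin (K + 2) → V → V → ℝ),
      (∀ k v', (∑ v : V, τ k v' v * P k v) = P k v') →
      (∑ Vt : Fin (K + 1) → V,
        (∏ i : Fin (K + 1), Real.exp (-(EV i.succ (Vt i)) + EV i.castSucc (Vt i))) *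
          ((∏ i : Fin K, τ i.succ.castSucc (Vt i.succ) (Vt i.castSucc)) * P 0 (Vt 0)))
        = Z (Fin.last (K + 1)) / Z 0 := by
  intro K
  induction K with
  | zero =>
    intro EV Z hZ P hP τ hτ
    have hZ0 : (0:ℝ) < Z 0 := by
      rw [hZ]; exact Finset.sum_pos (fun v _ => Real.exp_pos _) Finset.univ_nonempty
    have : ∑ Vt : Fin 1 → V,
        (∏ i : Fin 1, Real.exp (-(EV i.succ (Vt i)) + EV i.castSucc (Vt i))) *
          ((∏ i : Fin 0, τ i.succ.castSucc (Vt i.succ) (Vt i.castSucc)) * P 0 (Vt 0))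
        = ∑ v : V, Real.exp (-(EV 1 v) + EV 0 v) * (1 * P 0 v) := by
      refine Fintype.sum_equiv (Equiv.funUnique (Fin 1) V) _ _ (fun Vt => ?_)
      simp [Fin.prod_univ_one]
    rw [this]
    have : ∀ v : V, Real.exp (-(EV 1 v) + EV 0 v) * (1 * P 0 v)
        = Real.exp (-(EV 1 v)) / Z 0 := by
      intro v
      rw [hP, one_mul, ← mul_div_assoc, ← Real.exp_add]
      ring_nf
    rw [Finset.sum_congr rfl (fun v _ => this v), ← Finset.sum_div, ← hZ]
    rfl
  | succ K ih =>
    intro EV Z hZ P hP τ hτ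
    have hZpos : ∀ k, (0:ℝ) < Z k := fun k => by
      rw [hZ]; exact Finset.sum_pos (fun v _ => Real.exp_pos _) Finset.univ_nonempty
    -- peel first coordinate
    have hsum : ∑ Vt : Fin (K + 2) → V,
        (∏ i : Fin (K + 2), Real.exp (-(EV i.succ (Vt i)) + EV i.castSucc (Vt i))) *
          ((∏ i : Fin (K+1), τ i.succ.castSucc (Vt i.succ) (Vt i.castSucc)) * P 0 (Vt 0))
        = ∑ p : V × (Fin (K + 1) → V),
        (∏ i : Fin (K + 2), Real.exp (-(EV i.succ ((Fin.cons p.1 p.2 : Fin (K+2) → V) i)) + EV i.castSucc ((Fin.cons p.1 p.2 : Fin (K+2) → V) i))) *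
          ((∏ i : Fin (K+1), τ i.succ.castSucc ((Fin.cons p.1 p.2 : Fin (K+2) → V) i.succ) ((Fin.cons p.1 p.2 : Fin (K+2) → V) i.castSucc)) * P 0 ((Fin.cons p.1 p.2 : Fin (K+2) → V) 0)) :=
      (Fintype.sum_equiv (Fin.consEquiv fun _ => V) _ _ (fun p => rfl)).symm
    rw [hsum]
    simp only [Fintype.sum_prod_type]
    rw [Finset.sum_comm]
    have hkey : ∀ v : V, Real.exp (-(EV 1 v) + EV 0 v) * P 0 v = Z 1 / Z 0 * P 1 v := by
      intro v
      rw [hP 0, hP 1, ← mul_div_assoc, ← Real.exp_add, div_mul_div_comm]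
      rw [show -(EV 1 v) + EV 0 v + -(EV 0 v) = -(EV 1 v) from by ring]
      have h1 : Z 1 ≠ 0 := (hZpos 1).ne'
      have h0 : Z 0 ≠ 0 := (hZpos 0).ne'
      field_simp
    have hinner : ∀ g : Fin (K + 1) → V,
        (∑ v : V,
        (∏ i : Fin (K + 2), Real.exp (-(EV i.succ ((Fin.cons v g : Fin (K+2) → V) i)) + EV i.castSucc ((Fin.cons v g : Fin (K+2) → V) i))) *
          ((∏ i : Fin (K+1), τ i.succ.castSucc ((Fin.cons v g : Fin (K+2) → V) i.succ) ((Fin.cons v g : Fin (K+2) → V) i.castSucc)) * P 0 ((Fin.cons v g : Fin (K+2) → V) 0)))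
        = (Z 1 / Z 0) *
          ((∏ i : Fin (K + 1), Real.exp (-(EV i.succ.succ (g i)) + EV i.succ.castSucc (g i))) *
            ((∏ i : Fin K, τ i.succ.succ.castSucc (g i.succ) (g i.castSucc)) * P 1 (g 0))) := by
      intro g
      have hexpand : ∀ v : V,
          (∏ i : Fin (K + 2), Real.exp (-(EV i.succ ((Fin.cons v g : Fin (K+2) → V) i)) + EV i.castSucc ((Fin.cons v g : Fin (K+2) → V) i))) *
          ((∏ i : Fin (K+1), τ i.succ.castSucc ((Fin.cons v g : Fin (K+2) → V) i.succ) ((Fin.cons v g : Fin (K+2) → V) i.castSucc)) * P 0 ((Fin.cons v g : Fin (K+2) → V) 0))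
          = (τ 1 (g 0) v * (Real.exp (-(EV 1 v) + EV 0 v) * P 0 v)) *
            ((∏ i : Fin (K + 1), Real.exp (-(EV i.succ.succ (g i)) + EV i.succ.castSucc (g i))) *
              (∏ i : Fin K, τ i.succ.succ.castSucc (g i.succ) (g i.castSucc))) := by
        intro v
        have h1 : (∏ i : Fin (K + 2), Real.exp (-(EV i.succ ((Fin.cons v g : Fin (K+2) → V) i)) + EV i.castSucc ((Fin.cons v g : Fin (K+2) → V) i)))
            = Real.exp (-(EV 1 v) + EV 0 v) *
              ∏ i : Fin (K + 1), Real.exp (-(EV i.succ.succ (g i)) + EV i.succ.castSucc (g i)) := by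
          rw [Fin.prod_univ_succ]
          simp only [Fin.cons_zero, Fin.cons_succ, Fin.castSucc_zero, Fin.succ_zero_eq_one]
        have h2 : (∏ i : Fin (K+1), τ i.succ.castSucc ((Fin.cons v g : Fin (K+2) → V) i.succ) ((Fin.cons v g : Fin (K+2) → V) i.castSucc))
            = τ 1 (g 0) v * ∏ i : Fin K, τ i.succ.succ.castSucc (g i.succ) (g i.castSucc) := by
          rw [Fin.prod_univ_succ]
          simp only [← Fin.succ_castSucc, Fin.cons_succ, Fin.castSucc_zero, Fin.cons_zero,
            Fin.succ_zero_eq_one, Fin.castSucc_one]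
          simp only [Fin.succ_castSucc]
          rw [show (1 : Fin (K + 2)) = (0 : Fin (K + 1)).succ from Fin.succ_zero_eq_one.symm,
            Fin.cons_succ]
        rw [h1, h2, Fin.cons_zero]
        ring
      rw [Finset.sum_congr rfl (fun v _ => hexpand v)]
      rw [← Finset.sum_mul]
      have : (∑ v : V, τ 1 (g 0) v * (Real.exp (-(EV 1 v) + EV 0 v) * P 0 v))
          = Z 1 / Z 0 * P 1 (g 0) := by
        calc (∑ v : V, τ 1 (g 0) v * (Real.exp (-(EV 1 v) + EV 0 v) * P 0 v))
            = ∑ v : V, Z 1 / Z 0 * (τ 1 (g 0) v * P 1 v) := by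
              refine Finset.sum_congr rfl (fun v _ => ?_)
              rw [hkey v]; ring
          _ = Z 1 / Z 0 * ∑ v : V, τ 1 (g 0) v * P 1 v := by rw [← Finset.mul_sum]
          _ = Z 1 / Z 0 * P 1 (g 0) := by rw [hτ 1 (g 0)]
      rw [this]
      ring
    simp only [hinner]
    rw [← Finset.mul_sum]
    have ihh := ih (fun i => EV i.succ) (fun i => Z i.succ) (fun k => hZ k.succ)
      (fun i => P i.succ) (fun k v => hP k.succ v) (fun i => τ i.succ)
      (fun k v' => hτ k.succ v')
    simp only [Fin.succ_castSucc, Fin.succ_zero_eq_one, Fin.succ_last] at ihh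
    rw [ihh]
    rw [div_mul_div_comm, mul_comm (Z 0) (Z 1), mul_div_mul_left _ _ (hZpos 1).ne']

/-- The mAIS identity: `Z_K = Z_0 · Σ_V Λ(V) τ(V)`, where
`Λ(V) = ∏_{k=1}^K exp(-E_V(v^{(k)},k) + E_V(v^{(k)},k-1))` and `τ` is the annealing
process over the marginal distributions `P_k(v) = exp(-E_V(v,k))/Z_k`, provided each
kernel `τ_k` leaves `P_k(v)` invariant. Visible trajectories `v^{(1)},…,v^{(K)}` are
encoded over `Fin (K+1)` (paper's K is `K+1`). -/
theorem stmt12 {V : Type*} [Fintype V] (K : ℕ)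
    (EV : Fin (K + 2) → V → ℝ)
    (Z : Fin (K + 2) → ℝ) (hZ : ∀ k, Z k = ∑ v : V, Real.exp (-(EV k v)))
    (P : Fin (K + 2) → V → ℝ) (hP : ∀ k v, P k v = Real.exp (-(EV k v)) / Z k)
    (τ : Fin (K + 2) → V → V → ℝ)
    (hτinv : ∀ k v', (∑ v : V, τ k v' v * P k v) = P k v') :
    Z (Fin.last (K + 1)) = Z 0 *
      ∑ Vt : Fin (K + 1) → V,
        (∏ i : Fin (K + 1), Real.exp (-(EV i.succ (Vt i)) + EV i.castSucc (Vt i))) *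
          ((∏ i : Fin K, τ i.succ.castSucc (Vt i.succ) (Vt i.castSucc)) * P 0 (Vt 0)) := by
  rcases isEmpty_or_nonempty V with hV | hV
  · rw [hZ (Fin.last (K + 1)), hZ 0]
    simp
  · have hZ0 : (0:ℝ) < Z 0 := by
      rw [hZ]; exact Finset.sum_pos (fun v _ => Real.exp_pos _) Finset.univ_nonempty
    rw [stmt12_aux K EV Z hZ P hP τ hτinv, mul_div_cancel₀ _ hZ0.ne']
end

section
/- Theorem 1 (variance reduction by marginalization): under the factorized transition assumption T_k(x'|x) = P_k(h'|v') τ_k(v'|v), both Z_AIS and Z_mAIS are unbiased estimators of Z, and Var_T[Z_AIS(S_T)] ≥ Var_τ[Z_mAIS(S_τ)]. Moreover the difference of variances equals (Z_0²/N) Σ_X (W(X) − Λ(V))² T(X) ≥ 0. -/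
/-!
Summing out the hidden units of a trajectory whose transitions factor as
`P_k(h' | v') τ_k(v' | v)` leaves the visible chain driven by `τ`, and conditioning the AIS weight
`W` on the visible trajectory gives the marginal weight `Λ`, since each factor
`exp (-E_{k+1} + E_k)` averages under `P_k(h | v)` to `exp (-E^V_{k+1} + E^V_k)`. Hence `Λ` is the
conditional expectation of `W`: both have the same mean, which the AIS argument for the visible
chain (each `τ_k` fixes the `k`-th marginal) identifies as `Z_{K+1} / Z_0`, and
`E[W²] - E[Λ²] = E[(W - Λ)²]`. For an average of `N` i.i.d. samples the variance is `1/N` times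
the one-sample variance, which gives the stated difference.
-/

open Finset

section IID

variable {ι α : Type*} [Fintype ι] [DecidableEq ι] [Fintype α] (p : α → ℝ)

theorem sum_prod_mul_prod_eq_prod_sum (u : ι → α → ℝ) :
    ∑ S : ι → α, (∏ μ, p (S μ)) * ∏ μ, u μ (S μ) = ∏ μ, ∑ a, p a * u μ a := by
  simp_rw [← prod_mul_distrib]
  exact (Fintype.prod_sum fun μ a => p a * u μ a).symm

variable {p}

theorem sum_iid_mul_apply (hp : ∑ a, p a = 1) (f : α → ℝ) (ν : ι) :
    ∑ S : ι → α, (∏ μ, p (S μ)) * f (S ν) = ∑ a, p a * f a := by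
  have hmarg : ∀ μ, ∑ a, p a * (if μ = ν then f a else 1) =
      if μ = ν then ∑ a, p a * f a else 1 := by
    intro μ; split_ifs <;> simp [hp]
  simpa only [hmarg, prod_ite_eq', mem_univ, if_true] using
    sum_prod_mul_prod_eq_prod_sum p fun μ a => if μ = ν then f a else 1

theorem sum_iid_mul_apply_mul_apply (hp : ∑ a, p a = 1) (f : α → ℝ) {ν ν' : ι} (hνν' : ν ≠ ν') :
    ∑ S : ι → α, (∏ μ, p (S μ)) * (f (S ν) * f (S ν')) = (∑ a, p a * f a) ^ 2 := by
  have hmarg : ∀ μ, ∑ a, p a * ((if μ = ν then f a else 1) * (if μ = ν' then f a else 1)) =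
      (if μ = ν then ∑ a, p a * f a else 1) * (if μ = ν' then ∑ a, p a * f a else 1) := by
    intro μ
    by_cases h : μ = ν
    · subst h; simp [hνν']
    · by_cases h' : μ = ν'
      · subst h'; simp [h]
      · simp [h, h', hp]
  have key := sum_prod_mul_prod_eq_prod_sum p fun μ a =>
    (if μ = ν then f a else 1) * (if μ = ν' then f a else 1)
  simp only [hmarg, prod_mul_distrib, prod_ite_eq', mem_univ, if_true] at key
  rw [key, sq]

theorem sum_iid_mul_sum_sq (hp : ∑ a, p a = 1) (f : α → ℝ) :
    ∑ S : ι → α, (∏ μ, p (S μ)) * (∑ μ, f (S μ)) ^ 2 =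
      Fintype.card ι * (∑ a, p a * f a ^ 2 - (∑ a, p a * f a) ^ 2) +
        Fintype.card ι ^ 2 * (∑ a, p a * f a) ^ 2 := by
  have hpair : ∀ ν ν' : ι, ∑ S : ι → α, (∏ μ, p (S μ)) * (f (S ν) * f (S ν')) =
      (∑ a, p a * f a) ^ 2 +
        if ν = ν' then ∑ a, p a * f a ^ 2 - (∑ a, p a * f a) ^ 2 else 0 := by
    intro ν ν'
    split_ifs with h
    · subst h
      rw [add_sub_cancel, ← sum_iid_mul_apply hp (fun a => f a ^ 2) ν]
      simp only [sq]
    · simpa using sum_iid_mul_apply_mul_apply hp f h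
  calc ∑ S : ι → α, (∏ μ, p (S μ)) * (∑ μ, f (S μ)) ^ 2
      = ∑ ν, ∑ ν', ∑ S : ι → α, (∏ μ, p (S μ)) * (f (S ν) * f (S ν')) := by
        simp_rw [sq, sum_mul_sum, mul_sum]
        rw [sum_comm]
        exact sum_congr rfl fun _ _ => sum_comm
    _ = _ := by
        simp_rw [hpair, sum_add_distrib, sum_ite_eq, mem_univ, if_true]
        simp only [sum_const, card_univ, nsmul_eq_mul]
        ring

theorem sum_iid_mul_sampleMean {N : ℕ} (hN : N ≠ 0) (hp : ∑ a, p a = 1) (f : α → ℝ) (c : ℝ) :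
    ∑ S : Fin N → α, (∏ μ, p (S μ)) * (c / N * ∑ μ, f (S μ)) = c * ∑ a, p a * f a := by
  calc ∑ S : Fin N → α, (∏ μ, p (S μ)) * (c / N * ∑ μ, f (S μ))
      = c / N * ∑ μ, ∑ S : Fin N → α, (∏ ν, p (S ν)) * f (S μ) := by
        simp_rw [mul_sum, sum_comm (γ := Fin N)]
        exact sum_congr rfl fun _ _ => sum_congr rfl fun _ _ => by ring
    _ = c * ∑ a, p a * f a := by
        simp only [sum_iid_mul_apply hp, sum_const, card_univ, Fintype.card_fin, nsmul_eq_mul]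
        field_simp

theorem sum_iid_mul_sampleMean_sq {N : ℕ} (hN : N ≠ 0) (hp : ∑ a, p a = 1) (f : α → ℝ)
    (c : ℝ) :
    ∑ S : Fin N → α, (∏ μ, p (S μ)) * (c / N * ∑ μ, f (S μ)) ^ 2 =
      c ^ 2 / N * (∑ a, p a * f a ^ 2 - (∑ a, p a * f a) ^ 2) + c ^ 2 * (∑ a, p a * f a) ^ 2 := by
  simp_rw [mul_pow, mul_left_comm _ ((c / N) ^ 2), ← mul_sum]
  rw [sum_iid_mul_sum_sq hp, Fintype.card_fin]
  field_simp

end IID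

theorem Fintype.sum_pi_prod {ι α β M : Type*} [Fintype ι] [DecidableEq ι] [Fintype α] [Fintype β]
    [AddCommMonoid M] (F : (ι → α × β) → M) :
    ∑ x : ι → α × β, F x = ∑ a : ι → α, ∑ b : ι → β, F fun i => (a i, b i) := by
  rw [← Fintype.sum_prod_type']
  exact (Fintype.sum_equiv (Equiv.arrowProdEquivProdArrow ι (fun _ => α) fun _ => β) _ _
    fun _ => rfl)

theorem sum_sub_sq_mul_of_sum_eq {β : Type*} [Fintype β] (t f : β → ℝ) {s g : ℝ}
    (hs : ∑ b, t b = s) (hg : ∑ b, t b * f b = s * g) :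
    ∑ b, (f b - g) ^ 2 * t b = ∑ b, t b * f b ^ 2 - s * g ^ 2 := by
  have expand : ∀ b, (f b - g) ^ 2 * t b = t b * f b ^ 2 - 2 * g * (t b * f b) + g ^ 2 * t b :=
    fun b => by ring
  simp_rw [expand, sum_add_distrib, sum_sub_distrib, ← mul_sum, hs, hg]
  ring

theorem sampleMean_raoBlackwell {ι V H : Type*} [Fintype ι] [DecidableEq ι] [Fintype V]
    [Fintype H] {t : (ι → V × H) → ℝ} {s : (ι → V) → ℝ} {W : (ι → V × H) → ℝ} {Λ : (ι → V) → ℝ}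
    {N : ℕ} (hN : N ≠ 0) (hs : ∑ a, s a = 1)
    (hmass : ∀ a, ∑ b : ι → H, t (fun i => (a i, b i)) = s a)
    (hmean : ∀ a, ∑ b : ι → H, t (fun i => (a i, b i)) * W (fun i => (a i, b i)) = s a * Λ a)
    (c : ℝ) :
    ∑ SS : Fin N → ι → V × H, (∏ μ, t (SS μ)) * (c / N * ∑ μ, W (SS μ)) =
        c * ∑ a, s a * Λ a ∧
      ∑ SV : Fin N → ι → V, (∏ μ, s (SV μ)) * (c / N * ∑ μ, Λ (SV μ)) = c * ∑ a, s a * Λ a ∧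
      (∑ SS : Fin N → ι → V × H, (∏ μ, t (SS μ)) * (c / N * ∑ μ, W (SS μ)) ^ 2 -
          (∑ SS : Fin N → ι → V × H, (∏ μ, t (SS μ)) * (c / N * ∑ μ, W (SS μ))) ^ 2) -
        (∑ SV : Fin N → ι → V, (∏ μ, s (SV μ)) * (c / N * ∑ μ, Λ (SV μ)) ^ 2 -
          (∑ SV : Fin N → ι → V, (∏ μ, s (SV μ)) * (c / N * ∑ μ, Λ (SV μ))) ^ 2) =
        c ^ 2 / N * ∑ X, (W X - Λ fun i => (X i).1) ^ 2 * t X := by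
  have ht : ∑ X, t X = 1 := by
    rw [Fintype.sum_pi_prod]
    simp_rw [hmass]
    exact hs
  have htW : ∑ X, t X * W X = ∑ a, s a * Λ a := by
    rw [Fintype.sum_pi_prod]
    simp_rw [hmean]
  have hRB : ∑ X, (W X - Λ fun i => (X i).1) ^ 2 * t X =
      ∑ X, t X * W X ^ 2 - ∑ a, s a * Λ a ^ 2 := by
    rw [Fintype.sum_pi_prod, Fintype.sum_pi_prod, ← sum_sub_distrib]
    exact sum_congr rfl fun a _ => sum_sub_sq_mul_of_sum_eq _ _ (hmass a) (hmean a)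
  refine ⟨?_, sum_iid_mul_sampleMean hN hs Λ c, ?_⟩
  · rw [sum_iid_mul_sampleMean hN ht W c, htW]
  · rw [sum_iid_mul_sampleMean hN ht, sum_iid_mul_sampleMean hN hs,
      sum_iid_mul_sampleMean_sq hN ht, sum_iid_mul_sampleMean_sq hN hs, htW, hRB]
    ring

section MarkovChain

variable {S : Type*} {n : ℕ}

-- `τ i w v` is the probability of the step `v → w` from time `i` to time `i + 1`.
def pathWeight (τ : Fin n → S → S → ℝ) (init : S → ℝ) (g : Fin (n + 1) → S) : ℝ :=
  (∏ i : Fin n, τ i (g i.succ) (g i.castSucc)) * init (g 0)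

theorem pathWeight_nonneg {τ : Fin n → S → S → ℝ} {init : S → ℝ} (hτ : ∀ i w v, 0 ≤ τ i w v)
    (hinit : ∀ v, 0 ≤ init v) (g : Fin (n + 1) → S) : 0 ≤ pathWeight τ init g :=
  mul_nonneg (prod_nonneg fun _ _ => hτ _ _ _) (hinit _)

theorem pathWeight_snoc (τ : Fin (n + 1) → S → S → ℝ) (init : S → ℝ) (g : Fin (n + 1) → S)
    (w : S) :
    pathWeight τ init (Fin.snoc g w) =
      pathWeight (fun i => τ i.castSucc) init g * τ (Fin.last n) w (g (Fin.last n)) := by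
  simp only [pathWeight, Fin.prod_univ_castSucc, Fin.succ_castSucc, Fin.snoc_castSucc,
    Fin.succ_last, Fin.snoc_last]
  rw [← Fin.castSucc_zero, Fin.snoc_castSucc]
  ring

theorem pathWeight_prodMk {H : Type*} (τ : Fin n → S → S → ℝ) (q : Fin (n + 1) → S → H → ℝ)
    (T : Fin n → S × H → S × H → ℝ) (hT : ∀ i x' x, T i x' x = q i.succ x'.1 x'.2 * τ i x'.1 x.1)
    (init : S → ℝ) (a : Fin (n + 1) → S) (b : Fin (n + 1) → H) :
    pathWeight T (fun x => q 0 x.1 x.2 * init x.1) (fun j => (a j, b j)) =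
      pathWeight τ init a * ∏ j, q j (a j) (b j) := by
  simp only [pathWeight, hT, prod_mul_distrib, Fin.prod_univ_succ (f := fun j => q j (a j) (b j))]
  ring

theorem sum_pathWeight_prodMk_mul_prod {H : Type*} [Fintype H] (τ : Fin n → S → S → ℝ)
    (q : Fin (n + 1) → S → H → ℝ) (T : Fin n → S × H → S × H → ℝ)
    (hT : ∀ i x' x, T i x' x = q i.succ x'.1 x'.2 * τ i x'.1 x.1) (init : S → ℝ)
    (w : Fin (n + 1) → S → H → ℝ) (a : Fin (n + 1) → S) :
    ∑ b : Fin (n + 1) → H, pathWeight T (fun x => q 0 x.1 x.2 * init x.1) (fun j => (a j, b j)) *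
        ∏ j, w j (a j) (b j) =
      pathWeight τ init a * ∏ j, ∑ h, q j (a j) h * w j (a j) h := by
  simp_rw [pathWeight_prodMk τ q T hT, mul_assoc, ← prod_mul_distrib, ← mul_sum]
  rw [Fintype.prod_sum]

variable [Fintype S]

theorem Fin.sum_univ_pi_snoc {M : Type*} [AddCommMonoid M] (F : (Fin (n + 1) → S) → M) :
    ∑ g : Fin (n + 1) → S, F g = ∑ g : Fin n → S, ∑ w : S, F (Fin.snoc g w) := by
  rw [← Fintype.sum_equiv (Fin.snocEquiv fun _ => S) (fun p => F (Fin.snoc p.2 p.1)) _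
    fun _ => rfl, Fintype.sum_prod_type, sum_comm]

theorem sum_pathWeight (τ : Fin n → S → S → ℝ) (hτ : ∀ i v, ∑ w, τ i w v = 1)
    (init : S → ℝ) : ∑ g, pathWeight τ init g = ∑ v, init v := by
  induction n with
  | zero =>
    exact Fintype.sum_equiv (Equiv.funUnique (Fin 1) S) _ _ fun g => by simp [pathWeight]
  | succ n ih =>
    simp_rw [Fin.sum_univ_pi_snoc (n := n + 1), pathWeight_snoc, ← mul_sum, hτ, mul_one]
    exact ih _ fun i => hτ i.castSucc

theorem sum_mul_sum_mul_div_of_invariant {f f' : S → ℝ} (hf : ∀ v, f v ≠ 0) (τ : S → S → ℝ)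
    (hτ : ∀ w, ∑ v, τ w v * f v = f w) (φ : S → ℝ) :
    ∑ v, f v * ∑ w, τ w v * (f' w / f w) * φ w = ∑ w, f' w * φ w := by
  simp_rw [mul_sum]
  rw [sum_comm]
  refine sum_congr rfl fun w _ => ?_
  calc ∑ v, f v * (τ w v * (f' w / f w) * φ w) = (∑ v, τ w v * f v) * (f' w / f w) * φ w := by
        simp_rw [sum_mul]
        exact sum_congr rfl fun v _ => by ring
    _ = f' w * φ w := by rw [hτ, mul_div_cancel₀ _ (hf w)]

theorem sum_pathWeight_mul_prod_div (f : Fin (n + 2) → S → ℝ) (hf : ∀ k v, f k v ≠ 0)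
    (τ : Fin n → S → S → ℝ)
    (hτ : ∀ i w, ∑ v, τ i w v * f i.succ.castSucc v = f i.succ.castSucc w) (c : ℝ)
    (φ : S → ℝ) :
    ∑ g, pathWeight τ (fun v => c * f 0 v) g *
        (∏ j, f j.succ (g j) / f j.castSucc (g j)) * φ (g (Fin.last n)) =
      c * ∑ v, f (Fin.last (n + 1)) v * φ v := by
  induction n generalizing φ with
  | zero =>
    rw [mul_sum]
    refine Fintype.sum_equiv (Equiv.funUnique (Fin 1) S) _ _ fun g => ?_
    have := hf 0 (g 0)
    simp [pathWeight]
    field_simp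
  | succ n ih =>
    have step := ih (fun k => f k.castSucc) (fun k => hf k.castSucc) (fun i => τ i.castSucc)
      (fun i w => by simpa using hτ i.castSucc w) fun v => ∑ w, τ (Fin.last n) w v *
        (f (Fin.last (n + 2)) w / f (Fin.last (n + 1)).castSucc w) * φ w
    simp only [Fin.castSucc_zero] at step
    rw [← sum_mul_sum_mul_div_of_invariant (fun v => hf _ v) _ (by simpa using hτ (Fin.last n)),
      ← step, Fin.sum_univ_pi_snoc]
    refine sum_congr rfl fun g _ => ?_
    simp_rw [mul_sum]
    refine sum_congr rfl fun w _ => ?_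
    simp only [pathWeight_snoc, Fin.prod_univ_castSucc, Fin.snoc_castSucc, Fin.snoc_last,
      Fin.succ_last, Fin.succ_castSucc]
    ring

theorem sum_pathWeight_mul_prod_exp (e : Fin (n + 2) → S → ℝ) (Z : Fin (n + 2) → ℝ)
    (hZ : ∀ k, Z k ≠ 0) (π : Fin (n + 2) → S → ℝ) (hπ : ∀ k v, π k v = Real.exp (-e k v) / Z k)
    (τ : Fin n → S → S → ℝ)
    (hτ : ∀ i w, ∑ v, τ i w v * π i.succ.castSucc v = π i.succ.castSucc w) :
    ∑ g, pathWeight τ (π 0) g * ∏ j, Real.exp (-e j.succ (g j) + e j.castSucc (g j)) =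
      (∑ v, Real.exp (-e (Fin.last (n + 1)) v)) / Z 0 := by
  have hinv : ∀ i w, ∑ v, τ i w v * Real.exp (-e i.succ.castSucc v) =
      Real.exp (-e i.succ.castSucc w) := fun i w => by
    have := hτ i w
    simp_rw [hπ, ← mul_div_assoc, ← sum_div] at this
    exact (div_left_inj' (hZ _)).mp this
  have hratio : ∀ k k' v, Real.exp (-e k v + e k' v) =
      Real.exp (-e k v) / Real.exp (-e k' v) := fun k k' v => by
    rw [← Real.exp_sub, sub_neg_eq_add]
  have h := sum_pathWeight_mul_prod_div (fun k v => Real.exp (-e k v))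
    (fun _ _ => (Real.exp_pos _).ne') τ hinv (Z 0)⁻¹ fun _ => 1
  simp only [mul_one, ← div_eq_inv_mul, ← hπ] at h
  simpa only [hratio, inv_mul_eq_div] using h

end MarkovChain

theorem sum_exp_div_mul_exp {H : Type*} [Fintype H] (e e' : H → ℝ) {f f' : ℝ}
    (hf' : Real.exp (-f') = ∑ h, Real.exp (-e' h)) :
    ∑ h, Real.exp (-e h) / Real.exp (-f) * Real.exp (-e' h + e h) = Real.exp (-f' + f) := by
  have hterm : ∀ h, Real.exp (-e h) / Real.exp (-f) * Real.exp (-e' h + e h) =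
      Real.exp (-e' h) / Real.exp (-f) := fun h => by
    rw [div_mul_eq_mul_div, ← Real.exp_add]
    ring_nf
  rw [sum_congr rfl fun h _ => hterm h, ← sum_div, ← hf', ← Real.exp_sub, sub_neg_eq_add]

/-- Theorem 1, variance reduction by marginalization: under the factorized
transition assumption `T_k(x'|x) = P_k(h'|v') τ_k(v'|v)`, both `Z_AIS` and `Z_mAIS` are
unbiased estimators of `Z`, the difference of their variances equals
`(Z_0²/N) Σ_X (W(X) − Λ(V))² T(X) ≥ 0`, and hence `Var_T[Z_AIS] ≥ Var_τ[Z_mAIS]`.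
Trajectories are encoded over `Fin (K+1)` (paper's K is `K+1`). -/
theorem stmt13 {V H : Type*} [Fintype V] [Fintype H] (K N : ℕ) (hN : 0 < N)
    (E : Fin (K + 2) → V → H → ℝ)
    (Z : Fin (K + 2) → ℝ) (hZ : ∀ k, Z k = ∑ v : V, ∑ h : H, Real.exp (-(E k v h)))
    (P : Fin (K + 2) → V × H → ℝ)
    (hP : ∀ k x, P k x = Real.exp (-(E k x.1 x.2)) / Z k)
    (Pv : Fin (K + 2) → V → ℝ) (hPv : ∀ k v, Pv k v = ∑ h : H, P k (v, h))
    (hPvpos : ∀ k v, 0 < Pv k v)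
    (Phv : Fin (K + 2) → V → H → ℝ)
    (hPhv : ∀ k v h, Phv k v h = P k (v, h) / Pv k v)
    (τ : Fin (K + 2) → V → V → ℝ)
    (hτnn : ∀ k v v', 0 ≤ τ k v' v) (hτnorm : ∀ k v, (∑ v' : V, τ k v' v) = 1)
    (hτinv : ∀ k v', (∑ v : V, τ k v' v * Pv k v) = Pv k v')
    (T : Fin (K + 2) → V × H → V × H → ℝ)
    (hT : ∀ k (x' x : V × H), T k x' x = Phv k x'.1 x'.2 * τ k x'.1 x.1)
    (EV : Fin (K + 2) → V → ℝ)
    (hEV : ∀ k v, EV k v = -Real.log (∑ h : H, Real.exp (-(E k v h))))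
    (W : (Fin (K + 1) → V × H) → ℝ)
    (hW : ∀ X, W X = ∏ i : Fin (K + 1),
      Real.exp (-(E i.succ (X i).1 (X i).2) + E i.castSucc (X i).1 (X i).2))
    (Λ : (Fin (K + 1) → V) → ℝ)
    (hΛ : ∀ Vt, Λ Vt = ∏ i : Fin (K + 1),
      Real.exp (-(EV i.succ (Vt i)) + EV i.castSucc (Vt i)))
    (Tp : (Fin (K + 1) → V × H) → ℝ)
    (hTp : ∀ X, Tp X =
      (∏ i : Fin K, T i.succ.castSucc (X i.succ) (X i.castSucc)) * P 0 (X 0))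
    (τp : (Fin (K + 1) → V) → ℝ)
    (hτp : ∀ Vt, τp Vt =
      (∏ i : Fin K, τ i.succ.castSucc (Vt i.succ) (Vt i.castSucc)) * Pv 0 (Vt 0))
    (ZA : (Fin N → Fin (K + 1) → V × H) → ℝ)
    (hZA : ∀ SS, ZA SS = Z 0 / N * ∑ μ : Fin N, W (SS μ))
    (Zm : (Fin N → Fin (K + 1) → V) → ℝ)
    (hZm : ∀ SV, Zm SV = Z 0 / N * ∑ μ : Fin N, Λ (SV μ))
    (VarT Varτ : ℝ)
    (hVarT : VarT =
      (∑ SS : Fin N → Fin (K + 1) → V × H, (∏ μ : Fin N, Tp (SS μ)) * (ZA SS) ^ 2) -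
        (∑ SS : Fin N → Fin (K + 1) → V × H, (∏ μ : Fin N, Tp (SS μ)) * ZA SS) ^ 2)
    (hVarτ : Varτ =
      (∑ SV : Fin N → Fin (K + 1) → V, (∏ μ : Fin N, τp (SV μ)) * (Zm SV) ^ 2) -
        (∑ SV : Fin N → Fin (K + 1) → V, (∏ μ : Fin N, τp (SV μ)) * Zm SV) ^ 2) :
    (∑ SS : Fin N → Fin (K + 1) → V × H, (∏ μ : Fin N, Tp (SS μ)) * ZA SS) =
        Z (Fin.last (K + 1)) ∧
      (∑ SV : Fin N → Fin (K + 1) → V, (∏ μ : Fin N, τp (SV μ)) * Zm SV) =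
        Z (Fin.last (K + 1)) ∧
      VarT - Varτ = Z 0 ^ 2 / N *
        ∑ X : Fin (K + 1) → V × H, (W X - Λ (fun i => (X i).1)) ^ 2 * Tp X ∧
      VarT ≥ Varτ := by
  obtain hV | hV := isEmpty_or_nonempty V
  · have : NeZero N := ⟨hN.ne'⟩
    have hZlast : Z (Fin.last (K + 1)) = 0 := by simp [hZ]
    simp [hVarT, hVarτ, hZlast]
  have hH : Nonempty H := by
    by_contra hH
    simpa [not_nonempty_iff.mp hH, hPv] using hPvpos 0 hV.some
  have hEV' : ∀ k v, Real.exp (-EV k v) = ∑ h, Real.exp (-E k v h) := fun k v => by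
    rw [hEV, neg_neg, Real.exp_log (sum_pos (fun h _ => Real.exp_pos _) univ_nonempty)]
  have hZpos : ∀ k, 0 < Z k := fun k => by
    simpa only [hZ, ← hEV'] using sum_pos (fun v _ => Real.exp_pos (-EV k v)) univ_nonempty
  have hPv' : ∀ k v, Pv k v = Real.exp (-EV k v) / Z k := fun k v => by
    simp only [hPv, hP, hEV', sum_div]
  have hPhv' : ∀ k v h, Phv k v h = Real.exp (-E k v h) / Real.exp (-EV k v) := fun k v h => by
    rw [hPhv, hP, hPv', div_div_div_cancel_right₀ (hZpos k).ne']
  have hτp' : τp = pathWeight (fun i : Fin K => τ i.succ.castSucc) (Pv 0) := funext hτp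
  have hTp' : Tp = pathWeight (fun i : Fin K => T i.succ.castSucc)
      (fun x => Phv (0 : Fin (K + 1)).castSucc x.1 x.2 * Pv 0 x.1) := funext fun X => by
    simp only [hTp, pathWeight, Fin.castSucc_zero, hPhv, div_mul_cancel₀ _ (hPvpos 0 _).ne']
  have hτp_sum : ∑ a, τp a = 1 := by
    rw [hτp', sum_pathWeight _ fun _ => hτnorm _]
    simp_rw [hPv', ← sum_div, hEV', ← hZ]
    exact div_self (hZpos 0).ne'
  have hAIS : Z 0 * ∑ a, τp a * Λ a = Z (Fin.last (K + 1)) := by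
    simp_rw [hτp', hΛ]
    rw [sum_pathWeight_mul_prod_exp EV Z (fun k => (hZpos k).ne') Pv hPv' _ fun i w => hτinv _ w,
      mul_div_cancel₀ _ (hZpos 0).ne', hZ]
    simp_rw [hEV']
  have hPhv_sum : ∀ k v, ∑ h, Phv k v h = 1 := fun k v => by
    simp_rw [hPhv', ← sum_div, ← hEV']
    exact div_self (Real.exp_pos _).ne'
  have hmarg := sum_pathWeight_prodMk_mul_prod (fun i : Fin K => τ i.succ.castSucc)
    (fun j : Fin (K + 1) => Phv j.castSucc) _ (fun i _ _ => hT _ _ _) (Pv 0)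
  rw [← hτp', ← hTp'] at hmarg
  have hmass : ∀ a : Fin (K + 1) → V, ∑ b : Fin (K + 1) → H, Tp (fun i => (a i, b i)) = τp a :=
    fun a => by simpa [hPhv_sum] using hmarg (fun _ _ _ => 1) a
  have hmean : ∀ a : Fin (K + 1) → V, ∑ b : Fin (K + 1) → H,
      Tp (fun i => (a i, b i)) * W (fun i => (a i, b i)) = τp a * Λ a := fun a => by
    simpa [hW, hΛ, hPhv', sum_exp_div_mul_exp _ _ (hEV' _ _)] using
      hmarg (fun j v h => Real.exp (-E j.succ v h + E j.castSucc v h)) a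
  have hTp_nonneg : ∀ X, 0 ≤ Tp X := by
    have hPhv_nonneg : ∀ k v h, 0 ≤ Phv k v h := fun k v h => by rw [hPhv']; positivity
    rw [hTp']
    exact pathWeight_nonneg (fun i x' x => by rw [hT]; exact mul_nonneg (hPhv_nonneg ..) (hτnn ..))
      fun x => mul_nonneg (hPhv_nonneg ..) (hPvpos 0 _).le
  obtain ⟨hmeanT, hmeanτ, hdiff⟩ := sampleMean_raoBlackwell hN.ne' hτp_sum hmass hmean (Z 0)
  subst hVarT hVarτ
  simp_rw [hZA, hZm]
  refine ⟨hmeanT.trans hAIS, hmeanτ.trans hAIS, hdiff, sub_nonneg.mp ?_⟩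
  rw [hdiff]
  exact mul_nonneg (by positivity) (sum_nonneg fun X _ => mul_nonneg (sq_nonneg _) (hTp_nonneg X))
end

section
/- Theorem 2 (bias ordering of free energy estimators): under the factorized transition assumption, E_T[F_AIS(S_T)] ≥ E_τ[F_mAIS(S_τ)] ≥ F, where F_AIS(S_T) = -ln Z_0 - ln((1/N) Σ_μ W(X_μ)), F_mAIS(S_τ) = -ln Z_0 - ln((1/N) Σ_μ Λ(V_μ)), and F = -ln Z. -/
/-!
Both inequalities are Jensen's inequality for the concave logarithm. Under the factorized
transitions the joint path weight `T(X)` of `X = (V, H)` splits as `τ(V)` times a product of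
Gibbs conditionals `P_k(H_k | V_k)`, and averaging the AIS weight `W(X)` over these conditionals
gives exactly `Λ(V)`. Hence, for fixed visible samples, `-ln` of the mean of the `W`s is on
average at least `-ln` of the mean of the `Λ`s, which is the first inequality. The second one
is the same argument applied to the visible chain, using that the AIS estimator is unbiased:
since `τ_k` leaves the unnormalized visible marginal `exp(-EV_k)` invariant, the visible chain
started from `P_0(V)` and reweighted by `Λ` has marginal `exp(-EV_{k+1}) / Z_0` at step `k`, so
`E_τ[Λ] = Z_{K+1} / Z_0`.
-/

open Finset Real

theorem Real.sum_mul_log_le_log_sum_mul {ι : Type*} [Fintype ι] {w p : ι → ℝ}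
    (hw : ∀ i, 0 ≤ w i) (hw1 : ∑ i, w i = 1) (hp : ∀ i, 0 < p i) :
    ∑ i, w i * log (p i) ≤ log (∑ i, w i * p i) := by
  simpa using strictConcaveOn_log_Ioi.concaveOn.le_map_sum (t := univ)
    (fun i _ => hw i) hw1 (fun i _ => hp i)

theorem Fintype.sum_prod_mul_apply {ι α : Type*} [Fintype ι] [DecidableEq ι] [Fintype α]
    {p : ι → α → ℝ} (hp : ∀ i, ∑ x, p i x = 1) (g : α → ℝ) (i : ι) :
    ∑ S : ι → α, (∏ j, p j (S j)) * g (S i) = ∑ x, p i x * g x := by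
  set q := Function.update p i fun x => p i x * g x
  have hq : ∀ S : ι → α, (∏ j, p j (S j)) * g (S i) = ∏ j, q j (S j) := by
    intro S
    rw [Fintype.prod_eq_mul_prod_subtype_ne _ i,
      Fintype.prod_eq_mul_prod_subtype_ne (fun j => q j (S j)) i, mul_right_comm]
    simp only [q, Function.update_self]
    congr 1
    exact Finset.prod_congr rfl fun j _ => by rw [Function.update_of_ne j.2]
  simp_rw [hq, ← Fintype.prod_sum]
  rw [Fintype.prod_eq_mul_prod_subtype_ne _ i]
  rw [Finset.prod_eq_one fun j _ => by simp only [q, Function.update_of_ne j.2, hp], mul_one]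
  simp [q]

theorem Fintype.sum_prod_mul_sum {ι α : Type*} [Fintype ι] [DecidableEq ι] [Fintype α]
    {p : ι → α → ℝ} (hp : ∀ i, ∑ x, p i x = 1) (g : ι → α → ℝ) :
    ∑ S : ι → α, (∏ j, p j (S j)) * ∑ i, g i (S i) = ∑ i, ∑ x, p i x * g i x := by
  simp_rw [mul_sum]
  rw [sum_comm]
  exact Finset.sum_congr rfl fun i _ => sum_prod_mul_apply hp (g i) i

theorem sub_log_mean_le_sum_prod_mul {ι α : Type*} [Fintype ι] [DecidableEq ι] [Nonempty ι]
    [Fintype α]    {p g : ι → α → ℝ} (hp : ∀ i x, 0 ≤ p i x) (hp1 : ∀ i, ∑ x, p i x = 1)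
    (hg : ∀ i x, 0 < g i x) {a : ℝ} (ha : 0 < a) (c : ℝ) :
    c - log (a * ∑ i, ∑ x, p i x * g i x) ≤
      ∑ S : ι → α, (∏ i, p i (S i)) * (c - log (a * ∑ i, g i (S i))) := by
  set w : (ι → α) → ℝ := fun S => ∏ i, p i (S i)
  have hw1 : ∑ S, w S = 1 := by simp [w, ← Fintype.prod_sum, hp1]
  have hmean : ∑ S, w S * (a * ∑ i, g i (S i)) = a * ∑ i, ∑ x, p i x * g i x := by
    simp_rw [mul_left_comm _ a, ← mul_sum, w, Fintype.sum_prod_mul_sum hp1]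
  have hjensen := sum_mul_log_le_log_sum_mul (w := w) (p := fun S => a * ∑ i, g i (S i))
    (fun S => prod_nonneg fun i _ => hp i (S i)) hw1
    (fun S => mul_pos ha (sum_pos (fun i _ => hg i (S i)) univ_nonempty))
  show _ ≤ ∑ S, w S * _
  rw [← hmean]
  simp_rw [mul_sub, sum_sub_distrib, ← sum_mul, hw1, one_mul]
  linarith

theorem Fintype.sum_pi_pi_prod_type {ι κ α β M : Type*} [Fintype ι] [DecidableEq ι] [Fintype κ]
    [DecidableEq κ] [Fintype α] [Fintype β] [AddCommMonoid M] (f : (ι → κ → α × β) → M) :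
    ∑ S, f S = ∑ a : ι → κ → α, ∑ b : ι → κ → β, f fun i j => (a i j, b i j) := by
  let e : (ι → κ → α × β) ≃ (ι → κ → α) × (ι → κ → β) :=
    (Equiv.arrowCongr (.refl ι) (Equiv.arrowProdEquivProdArrow κ _ _)).trans
      (Equiv.arrowProdEquivProdArrow ι _ _)
  rw [← e.symm.sum_comp, Fintype.sum_prod_type]
  rfl

theorem sub_log_mean_marginal_le {κ α β : Type*} [Fintype κ] [DecidableEq κ] [Fintype α]
    [Fintype β] {N : ℕ} (hN : 0 < N) {p : (κ → α × β) → ℝ} {q : (κ → α) → ℝ}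
    {Φ : (κ → α) → (κ → β) → ℝ} {W : (κ → α × β) → ℝ} {Λ : (κ → α) → ℝ}
    (hpq : ∀ a b, p (fun j => (a j, b j)) = q a * Φ a b) (hq : ∀ a, 0 ≤ q a)
    (hΦ : ∀ a b, 0 ≤ Φ a b) (hΦ1 : ∀ a, ∑ b, Φ a b = 1) (hW : ∀ x, 0 < W x)
    (hΛ : ∀ a, ∑ b, Φ a b * W (fun j => (a j, b j)) = Λ a) (c : ℝ) :
    ∑ S : Fin N → κ → α, (∏ μ, q (S μ)) * (c - log ((1 / N : ℝ) * ∑ μ, Λ (S μ))) ≤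
      ∑ S : Fin N → κ → α × β, (∏ μ, p (S μ)) * (c - log ((1 / N : ℝ) * ∑ μ, W (S μ))) := by
  have : Nonempty (Fin N) := ⟨⟨0, hN⟩⟩
  rw [Fintype.sum_pi_pi_prod_type]
  refine sum_le_sum fun a _ => ?_
  simp_rw [hpq, prod_mul_distrib, mul_assoc, ← mul_sum]
  refine mul_le_mul_of_nonneg_left ?_ (prod_nonneg fun μ _ => hq _)
  simpa only [hΛ] using sub_log_mean_le_sum_prod_mul (p := fun μ => Φ (a μ))
    (g := fun μ b => W fun j => (a μ j, b j)) (fun μ => hΦ (a μ)) (fun μ => hΦ1 (a μ))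
    (fun μ b => hW _) (by positivity : (0 : ℝ) < 1 / N) c

theorem neg_log_le_sum_prod_mul_sub_log_mean {α : Type*} [Fintype α] {N : ℕ} (hN : 0 < N)
    {q Λ : α → ℝ} (hq : ∀ a, 0 ≤ q a) (hq1 : ∑ a, q a = 1) (hΛ : ∀ a, 0 < Λ a)
    {Z₀ Z₁ : ℝ} (hZ₀ : Z₀ ≠ 0) (hZ₁ : Z₁ ≠ 0) (hqΛ : ∑ a, q a * Λ a = Z₁ / Z₀) :
    -log Z₁ ≤ ∑ S : Fin N → α, (∏ μ, q (S μ)) * (-log Z₀ - log ((1 / N : ℝ) * ∑ μ, Λ (S μ))) := by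
  have : Nonempty (Fin N) := ⟨⟨0, hN⟩⟩
  refine le_of_eq_of_le ?_ (sub_log_mean_le_sum_prod_mul (p := fun _ => q) (g := fun _ => Λ)
    (fun _ => hq) (fun _ => hq1) (fun _ => hΛ) (by positivity : (0 : ℝ) < 1 / N) _)
  have hN' : (N : ℝ) ≠ 0 := by positivity
  simp only [hqΛ, sum_const, card_univ, Fintype.card_fin, nsmul_eq_mul]
  rw [← mul_assoc, one_div_mul_cancel hN', one_mul, log_div hZ₁ hZ₀]
  ring

section Paths
variable {V : Type*} [Fintype V]

theorem sum_path_succ {n : ℕ} (F : Fin (n + 1) → V → V → ℝ) (g : V → ℝ) :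
    ∑ x : Fin (n + 2) → V, (∏ i, F i (x i.succ) (x i.castSucc)) * g (x 0) =
      ∑ y : Fin (n + 1) → V,
        (∏ i : Fin n, F i.succ (y i.succ) (y i.castSucc)) * ∑ v, F 0 (y 0) v * g v := by
  rw [← (Fin.consEquiv fun _ => V).sum_comp, Fintype.sum_prod_type, sum_comm]
  refine sum_congr rfl fun y _ => ?_
  rw [mul_sum]
  refine sum_congr rfl fun v _ => ?_
  simp [Fin.consEquiv, Fin.prod_univ_succ]
  ring

theorem sum_path_mul_eq_sum_last {n : ℕ} (F : Fin n → V → V → ℝ) (G : Fin (n + 1) → V → ℝ)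
    (hG : ∀ i v', ∑ v, F i v' v * G i.castSucc v = G i.succ v') :
    ∑ x : Fin (n + 1) → V, (∏ i, F i (x i.succ) (x i.castSucc)) * G 0 (x 0) =
      ∑ v, G (Fin.last n) v := by
  induction n with
  | zero =>
    rw [← (Equiv.funUnique (Fin 1) V).symm.sum_comp]
    simp only [Fin.prod_univ_zero, one_mul]
    rfl
  | succ n ih =>
    rw [sum_path_succ]
    have h0 := hG 0
    rw [Fin.castSucc_zero] at h0
    simp_rw [h0]
    rw [ih (fun i => F i.succ) (fun i => G i.succ) fun i v' => by
      simpa only [Fin.succ_castSucc] using hG i.succ v', Fin.succ_last]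

theorem sum_path_mul_eq_sum {n : ℕ} (F : Fin n → V → V → ℝ) (hF : ∀ i v, ∑ v', F i v' v = 1)
    (g : V → ℝ) :
    ∑ x : Fin (n + 1) → V, (∏ i, F i (x i.succ) (x i.castSucc)) * g (x 0) = ∑ v, g v := by
  induction n generalizing g with
  | zero =>
    rw [← (Equiv.funUnique (Fin 1) V).symm.sum_comp]
    simp only [Fin.prod_univ_zero, one_mul]
    rfl
  | succ n ih =>
    rw [sum_path_succ, ih (fun i => F i.succ) (fun i => hF i.succ) fun v' => ∑ v, F 0 v' v * g v,
      sum_comm]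
    simp [← sum_mul, hF]

theorem sum_path_mul_prod_exp {n : ℕ} (τ : Fin (n + 2) → V → V → ℝ) (A : Fin (n + 2) → V → ℝ)
    (hτ : ∀ k v', ∑ v, τ k v' v * exp (-A k v) = exp (-A k v')) :
    ∑ x : Fin (n + 1) → V, (∏ i : Fin n, τ i.succ.castSucc (x i.succ) (x i.castSucc)) *
        exp (-A 0 (x 0)) * ∏ j, exp (-A j.succ (x j) + A j.castSucc (x j)) =
      ∑ v, exp (-A (Fin.last (n + 1)) v) := by
  have hx : ∀ x : Fin (n + 1) → V,
      (∏ i : Fin n, τ i.succ.castSucc (x i.succ) (x i.castSucc)) *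
        exp (-A 0 (x 0)) * ∏ j, exp (-A j.succ (x j) + A j.castSucc (x j)) =
      (∏ i : Fin n, τ i.succ.castSucc (x i.succ) (x i.castSucc) *
        exp (-A i.succ.succ (x i.succ) + A i.succ.castSucc (x i.succ))) *
        exp (-A (Fin.succ 0) (x 0)) := by
    intro x
    have h0 : exp (-A 0 (x 0)) * exp (-A (Fin.succ 0) (x 0) + A 0 (x 0)) =
        exp (-A (Fin.succ 0) (x 0)) := by
      rw [← exp_add]
      ring_nf
    rw [Fin.prod_univ_succ, prod_mul_distrib, Fin.castSucc_zero, ← h0]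
    ring
  simp_rw [hx]
  rw [← Fin.succ_last]
  refine sum_path_mul_eq_sum_last
    (fun i v' v => τ i.succ.castSucc v' v * exp (-A i.succ.succ v' + A i.succ.castSucc v'))
    (fun i v => exp (-A i.succ v)) fun i v' => ?_
  calc _ = (∑ v, τ i.succ.castSucc v' v * exp (-A i.succ.castSucc v)) *
        exp (-A i.succ.succ v' + A i.succ.castSucc v') := by
        rw [sum_mul]
        simp only [Fin.succ_castSucc]
        exact sum_congr rfl fun v _ => by ring
    _ = _ := by
        rw [hτ, ← exp_add]
        ring_nf

end Paths

section Gibbs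
variable {V H : Type*} [Fintype H] [Nonempty H] {e : V → H → ℝ} {A : V → ℝ}

theorem exp_neg_eq_sum_exp_neg (hA : ∀ v, A v = -log (∑ h, exp (-e v h))) (v : V) :
    exp (-A v) = ∑ h, exp (-e v h) := by
  rw [hA, neg_neg, exp_log (by positivity)]

variable {Z : ℝ} {P : V × H → ℝ} {Pv : V → ℝ}

theorem marginal_eq_exp_div (hA : ∀ v, A v = -log (∑ h, exp (-e v h)))
    (hP : ∀ x, P x = exp (-e x.1 x.2) / Z) (hPv : ∀ v, Pv v = ∑ h, P (v, h)) (v : V) :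
    Pv v = exp (-A v) / Z := by
  simp only [hPv, hP, exp_neg_eq_sum_exp_neg hA, sum_div]

theorem conditional_eq_exp {Phv : V → H → ℝ} (hA : ∀ v, A v = -log (∑ h, exp (-e v h)))
    (hP : ∀ x, P x = exp (-e x.1 x.2) / Z) (hPv : ∀ v, Pv v = ∑ h, P (v, h)) (hZ : Z ≠ 0)
    (hPhv : ∀ v h, Phv v h = P (v, h) / Pv v) (v : V) (h : H) :
    Phv v h = exp (-e v h + A v) := by
  rw [hPhv, hP, marginal_eq_exp_div hA hP hPv, div_div_div_cancel_right₀ hZ, exp_add,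
    div_eq_mul_inv, ← exp_neg, neg_neg]

end Gibbs

section Chain
variable {V H : Type*} {K : ℕ}

theorem joint_path_weight_eq_mul_prod_conditional {P : Fin (K + 2) → V × H → ℝ}
    {Pv : Fin (K + 2) → V → ℝ} {Phv : Fin (K + 2) → V → H → ℝ} {τ : Fin (K + 2) → V → V → ℝ}
    {T : Fin (K + 2) → V × H → V × H → ℝ} {Tp : (Fin (K + 1) → V × H) → ℝ}
    {τp : (Fin (K + 1) → V) → ℝ}
    (hP₀ : ∀ v h, P 0 (v, h) = Phv 0 v h * Pv 0 v)
    (hT : ∀ k (x' x : V × H), T k x' x = Phv k x'.1 x'.2 * τ k x'.1 x.1)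
    (hTp : ∀ X, Tp X =
      (∏ i : Fin K, T i.succ.castSucc (X i.succ) (X i.castSucc)) * P 0 (X 0))
    (hτp : ∀ Vt, τp Vt =
      (∏ i : Fin K, τ i.succ.castSucc (Vt i.succ) (Vt i.castSucc)) * Pv 0 (Vt 0))
    (Vt : Fin (K + 1) → V) (Ht : Fin (K + 1) → H) :
    Tp (fun j => (Vt j, Ht j)) = τp Vt * ∏ j, Phv j.castSucc (Vt j) (Ht j) := by
  rw [hTp, hτp, hP₀, Fin.prod_univ_succ (fun j => Phv j.castSucc (Vt j) (Ht j))]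
  simp only [hT, prod_mul_distrib, Fin.castSucc_zero]
  ring

theorem sum_prod_conditional_mul_weight [Fintype H] {E : Fin (K + 2) → V → H → ℝ}
    {EV : Fin (K + 2) → V → ℝ} {Phv : Fin (K + 2) → V → H → ℝ} {W : (Fin (K + 1) → V × H) → ℝ}
    {Λ : (Fin (K + 1) → V) → ℝ}
    (hEV : ∀ k v, exp (-EV k v) = ∑ h, exp (-E k v h))
    (hPhv : ∀ k v h, Phv k v h = exp (-E k v h + EV k v))
    (hW : ∀ X, W X = ∏ i : Fin (K + 1),
      exp (-(E i.succ (X i).1 (X i).2) + E i.castSucc (X i).1 (X i).2))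
    (hΛ : ∀ Vt, Λ Vt = ∏ i : Fin (K + 1), exp (-(EV i.succ (Vt i)) + EV i.castSucc (Vt i)))
    (Vt : Fin (K + 1) → V) :
    ∑ Ht : Fin (K + 1) → H, (∏ j, Phv j.castSucc (Vt j) (Ht j)) * W (fun j => (Vt j, Ht j)) =
      Λ Vt := by
  simp_rw [hW, hΛ, ← prod_mul_distrib]
  rw [← Fintype.prod_sum fun j h => Phv j.castSucc (Vt j) h *
    exp (-E j.succ (Vt j) h + E j.castSucc (Vt j) h)]
  refine prod_congr rfl fun j _ => ?_
  have hsite : ∀ h, Phv j.castSucc (Vt j) h *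
      exp (-E j.succ (Vt j) h + E j.castSucc (Vt j) h) =
      exp (-E j.succ (Vt j) h) * exp (EV j.castSucc (Vt j)) := fun h => by
    rw [hPhv, ← exp_add, ← exp_add]
    ring_nf
  rw [sum_congr rfl fun h _ => hsite h, ← sum_mul, ← hEV, ← exp_add]

theorem sum_visible_path_weight_mul_marginal_weight [Fintype V] {Z : Fin (K + 2) → ℝ}
    {EV : Fin (K + 2) → V → ℝ} {Pv : Fin (K + 2) → V → ℝ} {τ : Fin (K + 2) → V → V → ℝ}
    {τp : (Fin (K + 1) → V) → ℝ} {Λ : (Fin (K + 1) → V) → ℝ}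
    (hZ : ∀ k, Z k = ∑ v, exp (-EV k v)) (hZ₀ : ∀ k, Z k ≠ 0)
    (hPv : ∀ k v, Pv k v = exp (-EV k v) / Z k)
    (hτinv : ∀ k v', (∑ v : V, τ k v' v * Pv k v) = Pv k v')
    (hτp : ∀ Vt, τp Vt =
      (∏ i : Fin K, τ i.succ.castSucc (Vt i.succ) (Vt i.castSucc)) * Pv 0 (Vt 0))
    (hΛ : ∀ Vt, Λ Vt = ∏ i : Fin (K + 1), exp (-(EV i.succ (Vt i)) + EV i.castSucc (Vt i))) :
    ∑ Vt, τp Vt * Λ Vt = Z (Fin.last (K + 1)) / Z 0 := by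
  have hτ : ∀ k v', ∑ v, τ k v' v * exp (-EV k v) = exp (-EV k v') := fun k v' => by
    have := hτinv k v'
    simp only [hPv, mul_div_assoc', ← sum_div] at this
    exact (div_left_inj' (hZ₀ k)).mp this
  simp_rw [hτp, hΛ, hPv 0, mul_div_assoc', div_mul_eq_mul_div, ← sum_div]
  rw [sum_path_mul_prod_exp τ EV hτ, hZ (Fin.last _), hZ 0]

end Chain

/-- Theorem 2, bias ordering of free energy estimators: under the
factorized transition assumption, `E_T[F_AIS(S_T)] ≥ E_τ[F_mAIS(S_τ)] ≥ F`, where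
`F_AIS(S_T) = -ln Z_0 - ln((1/N) Σ_μ W(X_μ))`, `F_mAIS(S_τ) = -ln Z_0 - ln((1/N) Σ_μ Λ(V_μ))`
and `F = -ln Z`. Trajectories are encoded over `Fin (K+1)` (paper's K is `K+1`). -/
theorem stmt14 {V H : Type*} [Fintype V] [Fintype H] (K N : ℕ) (hN : 0 < N)
    (E : Fin (K + 2) → V → H → ℝ)
    (Z : Fin (K + 2) → ℝ) (hZ : ∀ k, Z k = ∑ v : V, ∑ h : H, Real.exp (-(E k v h)))
    (P : Fin (K + 2) → V × H → ℝ)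
    (hP : ∀ k x, P k x = Real.exp (-(E k x.1 x.2)) / Z k)
    (Pv : Fin (K + 2) → V → ℝ) (hPv : ∀ k v, Pv k v = ∑ h : H, P k (v, h))
    (hPvpos : ∀ k v, 0 < Pv k v)
    (Phv : Fin (K + 2) → V → H → ℝ)
    (hPhv : ∀ k v h, Phv k v h = P k (v, h) / Pv k v)
    (τ : Fin (K + 2) → V → V → ℝ)
    (hτnn : ∀ k v v', 0 ≤ τ k v' v) (hτnorm : ∀ k v, (∑ v' : V, τ k v' v) = 1)
    (hτinv : ∀ k v', (∑ v : V, τ k v' v * Pv k v) = Pv k v')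
    (T : Fin (K + 2) → V × H → V × H → ℝ)
    (hT : ∀ k (x' x : V × H), T k x' x = Phv k x'.1 x'.2 * τ k x'.1 x.1)
    (EV : Fin (K + 2) → V → ℝ)
    (hEV : ∀ k v, EV k v = -Real.log (∑ h : H, Real.exp (-(E k v h))))
    (W : (Fin (K + 1) → V × H) → ℝ)
    (hW : ∀ X, W X = ∏ i : Fin (K + 1),
      Real.exp (-(E i.succ (X i).1 (X i).2) + E i.castSucc (X i).1 (X i).2))
    (Λ : (Fin (K + 1) → V) → ℝ)
    (hΛ : ∀ Vt, Λ Vt = ∏ i : Fin (K + 1),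
      Real.exp (-(EV i.succ (Vt i)) + EV i.castSucc (Vt i)))
    (Tp : (Fin (K + 1) → V × H) → ℝ)
    (hTp : ∀ X, Tp X =
      (∏ i : Fin K, T i.succ.castSucc (X i.succ) (X i.castSucc)) * P 0 (X 0))
    (τp : (Fin (K + 1) → V) → ℝ)
    (hτp : ∀ Vt, τp Vt =
      (∏ i : Fin K, τ i.succ.castSucc (Vt i.succ) (Vt i.castSucc)) * Pv 0 (Vt 0))
    (FA : (Fin N → Fin (K + 1) → V × H) → ℝ)
    (hFA : ∀ SS, FA SS =
      -Real.log (Z 0) - Real.log ((1 / N : ℝ) * ∑ μ : Fin N, W (SS μ)))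
    (Fm : (Fin N → Fin (K + 1) → V) → ℝ)
    (hFm : ∀ SV, Fm SV =
      -Real.log (Z 0) - Real.log ((1 / N : ℝ) * ∑ μ : Fin N, Λ (SV μ))) :
    (∑ SS : Fin N → Fin (K + 1) → V × H, (∏ μ : Fin N, Tp (SS μ)) * FA SS) ≥
        (∑ SV : Fin N → Fin (K + 1) → V, (∏ μ : Fin N, τp (SV μ)) * Fm SV) ∧
      (∑ SV : Fin N → Fin (K + 1) → V, (∏ μ : Fin N, τp (SV μ)) * Fm SV) ≥
        -Real.log (Z (Fin.last (K + 1))) := by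
  have : Nonempty (Fin N) := ⟨⟨0, hN⟩⟩
  rcases isEmpty_or_nonempty V with hV | hV
  -- every sum over visible states is empty, and `log 0 = 0`
  · simp [hZ]
  have : Nonempty H := by
    by_contra h
    simpa [not_nonempty_iff.mp h, hPv] using hPvpos 0 hV.some
  have hZpos : ∀ k, 0 < Z k := fun k => hZ k ▸ by positivity
  have hexpEV : ∀ k v, exp (-EV k v) = ∑ h, exp (-E k v h) :=
    fun k => exp_neg_eq_sum_exp_neg (hEV k)
  have hZ' : ∀ k, Z k = ∑ v, exp (-EV k v) := by simp [hZ, hexpEV]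
  have hPv' : ∀ k v, Pv k v = exp (-EV k v) / Z k :=
    fun k => marginal_eq_exp_div (hEV k) (hP k) (hPv k)
  have hPhv' : ∀ k v h, Phv k v h = exp (-E k v h + EV k v) :=
    fun k => conditional_eq_exp (hEV k) (hP k) (hPv k) (hZpos k).ne' (hPhv k)
  have hτp_nonneg : ∀ Vt, 0 ≤ τp Vt := fun Vt => hτp Vt ▸
    mul_nonneg (prod_nonneg fun _ _ => hτnn _ _ _) (hPvpos _ _).le
  have hτp_sum : ∑ Vt, τp Vt = 1 := by
    simp_rw [hτp]
    rw [sum_path_mul_eq_sum _ (fun i => hτnorm _)]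
    simp [hPv', ← sum_div, ← hZ', (hZpos 0).ne']
  have hPhv_sum : ∀ k v, ∑ h, Phv k v h = 1 := fun k v => by
    simp_rw [hPhv, ← sum_div, ← hPv, div_self (hPvpos k v).ne']
  simp only [hFA, hFm]
  constructor
  · refine sub_log_mean_marginal_le hN
      (joint_path_weight_eq_mul_prod_conditional (fun v h => ?_) hT hTp hτp) hτp_nonneg
      (fun _ _ => prod_nonneg fun _ _ => hPhv' _ _ _ ▸ (exp_pos _).le)
      (fun _ => by simp [← Fintype.prod_sum, hPhv_sum]) (fun X => hW X ▸ by positivity)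
      (sum_prod_conditional_mul_weight hexpEV hPhv' hW hΛ) _
    rw [hPhv, div_mul_cancel₀ _ (hPvpos 0 v).ne']
  · exact neg_log_le_sum_prod_mul_sub_log_mean hN hτp_nonneg hτp_sum
      (fun Vt => hΛ Vt ▸ by positivity) (hZpos 0).ne' (hZpos _).ne'
      (sum_visible_path_weight_mul_marginal_weight hZ' (fun k => (hZpos k).ne') hPv' hτinv hτp hΛ)
end
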